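/- Let α = (α_1,...,α_N) be a composition of m with all α_i even, and let W = (1/(2N)) ⊕_{i=1}^N (U_{α_i} - U_{α_i}^T) + (1/(2N²)) 𝟙_{m×m}. Then W is invertible and W^{-1} = 4N² Q_m W Q_m. -/
import Mathlib


open Matrix Finset

/-- The a×a strictly upper triangular matrix with all entries 1 above the diagonal,
viewed here through its m×m block-diagonal placements. -/
def Umat (m : ℕ) : Matrix (Fin m) (Fin m) ℝ :=
  Matrix.of fun i j => if (i : ℕ) < (j : ℕ) then 1 else 0

/-- The m×m diagonal matrix with alternating diagonal entries (+1,-1,+1,...). -/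
def Qmat (m : ℕ) : Matrix (Fin m) (Fin m) ℝ :=
  Matrix.diagonal fun i => (-1 : ℝ) ^ (i : ℕ)

/-- The all-ones m×m matrix. -/
def Jmat (m : ℕ) : Matrix (Fin m) (Fin m) ℝ :=
  Matrix.of fun _ _ => 1

/-- Offset of the i-th block: sum of the sizes of the preceding blocks. -/
def blockOff {N : ℕ} (α : Fin N → ℕ) (i : Fin N) : ℕ :=
  ∑ j ∈ Finset.univ.filter (fun j => j < i), α j

/-- The m×m block diagonal matrix `⊕_{i=1}^N (U_{α_i} - U_{α_i}ᵀ)` (for `m = Σ α_i`):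
rows/columns `blockOff α i ≤ r,c < blockOff α i + α i` carry the i-th block
`U_{α_i} - U_{α_i}ᵀ`, whose (p,q) entry is 1 if p < q, -1 if p > q, 0 on the diagonal;
all entries outside the diagonal blocks vanish. -/
def blockSkew {N : ℕ} (α : Fin N → ℕ) (m : ℕ) : Matrix (Fin m) (Fin m) ℝ :=
  Matrix.of fun r c =>
    if ∃ i : Fin N, blockOff α i ≤ (r : ℕ) ∧ (r : ℕ) < blockOff α i + α i ∧
        blockOff α i ≤ (c : ℕ) ∧ (c : ℕ) < blockOff α i + α i then
      (if (r : ℕ) < (c : ℕ) then 1 else if (c : ℕ) < (r : ℕ) then -1 else 0)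
    else 0

/-- `W_α = (1/(2N)) ⊕_i (U_{α_i} - U_{α_i}ᵀ) + (1/(2N²)) 𝟙_{m×m}`. -/
noncomputable def Wmat {N : ℕ} (α : Fin N → ℕ) (m : ℕ) : Matrix (Fin m) (Fin m) ℝ :=
  (1 / (2 * (N : ℝ))) • blockSkew α m + (1 / (2 * (N : ℝ) ^ 2)) • Jmat m

/-! ### Auxiliary machinery -/

namespace WmatAux

/-- membership of an index in block `i` -/
abbrev inB {N : ℕ} (α : Fin N → ℕ) (i : Fin N) (r : ℕ) : Prop :=
  blockOff α i ≤ r ∧ r < blockOff α i + α i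

/-- the sign function of the skew blocks -/
def sg (r c : ℕ) : ℝ := if r < c then 1 else if c < r then -1 else 0

lemma sg_self (r : ℕ) : sg r r = 0 := by simp [sg]

lemma sg_of_lt {r c : ℕ} (h : c < r) : sg r c = -1 := by
  unfold sg; rw [if_neg (by omega), if_pos h]

lemma sg_of_gt {r c : ℕ} (h : r < c) : sg r c = 1 := by
  unfold sg; rw [if_pos h]

lemma sg_antisymm (r c : ℕ) : sg c r = - sg r c := by
  rcases lt_trichotomy r c with h | h | h
  · rw [sg_of_lt h, sg_of_gt h]
  · subst h; rw [sg_self]; ring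
  · rw [sg_of_gt h, sg_of_lt h]; ring

/-- alternating partial sum -/
def Ef (n : ℕ) : ℝ := if Even n then 0 else 1

lemma Ef_even {n : ℕ} (h : Even n) : Ef n = 0 := if_pos h

lemma Ef_add_one (r : ℕ) : Ef r + Ef (r + 1) = 1 := by
  by_cases h : Even r <;> simp [Ef, h, Nat.even_add_one]

lemma Ef_succ_sub (r : ℕ) : Ef (r + 1) - Ef r = (-1 : ℝ) ^ r := by
  by_cases h : Even r
  · rw [h.neg_one_pow]; simp [Ef, h, Nat.even_add_one]
  · rw [(Nat.not_even_iff_odd.mp h).neg_one_pow]; simp [Ef, h, Nat.even_add_one]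

lemma ico_sum_neg_one {u v : ℕ} (h : u ≤ v) :
    ∑ n ∈ Ico u v, (-1 : ℝ) ^ n = Ef v - Ef u := by
  rw [Finset.sum_Ico_eq_sub _ h, neg_one_geom_sum, neg_one_geom_sum]; rfl

lemma sum_sg_piece {u v : ℕ} (h : u ≤ v) (g : ℕ → ℝ) (e : ℝ)
    (hg : ∀ n, u ≤ n → n < v → g n = e * (-1 : ℝ) ^ n) :
    ∑ n ∈ Ico u v, g n = e * (Ef v - Ef u) := by
  rw [← ico_sum_neg_one h, Finset.mul_sum]
  exact Finset.sum_congr rfl fun n hn => by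
    rw [mem_Ico] at hn; exact hg n hn.1 hn.2

lemma sum_singleton_pt (u : ℕ) (g : ℕ → ℝ) (h : g u = 0) :
    ∑ n ∈ Ico u (u + 1), g n = 0 := by
  rw [Nat.Ico_succ_singleton, Finset.sum_singleton, h]

/-- the key `Ico` computation for the row sums -/
lemma sumB_Ico {o a r : ℕ} (ho : Even o) (ha : Even a) (h1 : o ≤ r) (h2 : r < o + a) :
    ∑ n ∈ Ico o (o + a), sg r n * (-1 : ℝ) ^ n = -1 := by
  have e1 : o ≤ r + 1 := by omega
  have e2 : r + 1 ≤ o + a := by omega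
  rw [← Finset.sum_Ico_consecutive (fun n => sg r n * (-1 : ℝ) ^ n) e1 e2,
      ← Finset.sum_Ico_consecutive (fun n => sg r n * (-1 : ℝ) ^ n) h1 (Nat.le_succ r)]
  have hA : ∑ n ∈ Ico o r, sg r n * (-1 : ℝ) ^ n = (-1) * (Ef r - Ef o) :=
    sum_sg_piece (by omega) _ _ (fun n hn1 hn2 => by rw [sg_of_lt hn2])
  have hB : ∑ n ∈ Ico r (r + 1), sg r n * (-1 : ℝ) ^ n = 0 :=
    sum_singleton_pt _ _ (by rw [sg_self]; ring)
  have hC : ∑ n ∈ Ico (r + 1) (o + a), sg r n * (-1 : ℝ) ^ n = 1 * (Ef (o + a) - Ef (r + 1)) :=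
    sum_sg_piece e2 _ _ (fun n hn1 hn2 => by rw [sg_of_gt (by omega)])
  rw [hA, hB, hC, Ef_even ho, Ef_even (ho.add ha)]
  have := Ef_add_one r
  linarith

/-- the key `Ico` computation for the quadratic sums -/
lemma sumD_Ico {o a r c : ℕ} (ho : Even o) (ha : Even a)
    (hr1 : o ≤ r) (hr2 : r < o + a) (hc1 : o ≤ c) (hc2 : c < o + a) :
    ∑ n ∈ Ico o (o + a), sg r n * (-1 : ℝ) ^ n * sg n c
      = if r = c then (-1 : ℝ) ^ r else 0 := by
  set g : ℕ → ℝ := fun n => sg r n * (-1 : ℝ) ^ n * sg n c with hg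
  rcases lt_trichotomy r c with h | h | h
  · rw [if_neg (by omega)]
    rw [← Finset.sum_Ico_consecutive g (by omega : o ≤ c + 1) (by omega : c + 1 ≤ o + a),
        ← Finset.sum_Ico_consecutive g (by omega : o ≤ c) (by omega : c ≤ c + 1),
        ← Finset.sum_Ico_consecutive g (by omega : o ≤ r + 1) (by omega : r + 1 ≤ c),
        ← Finset.sum_Ico_consecutive g (by omega : o ≤ r) (by omega : r ≤ r + 1)]
    have p1 : ∑ n ∈ Ico o r, g n = (-1) * (Ef r - Ef o) :=
      sum_sg_piece (by omega) _ _ (fun n h1 h2 => by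
        rw [hg]; simp only []; rw [sg_of_lt h2, sg_of_gt (by omega)]; ring)
    have p2 : ∑ n ∈ Ico r (r + 1), g n = 0 :=
      sum_singleton_pt _ _ (by rw [hg]; simp only []; rw [sg_self]; ring)
    have p3 : ∑ n ∈ Ico (r + 1) c, g n = 1 * (Ef c - Ef (r + 1)) :=
      sum_sg_piece (by omega) _ _ (fun n h1 h2 => by
        rw [hg]; simp only []; rw [sg_of_gt (by omega), sg_of_gt h2]; ring)
    have p4 : ∑ n ∈ Ico c (c + 1), g n = 0 :=
      sum_singleton_pt _ _ (by rw [hg]; simp only []; rw [sg_self c]; ring)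
    have p5 : ∑ n ∈ Ico (c + 1) (o + a), g n = (-1) * (Ef (o + a) - Ef (c + 1)) :=
      sum_sg_piece (by omega) _ _ (fun n h1 h2 => by
        rw [hg]; simp only []; rw [sg_of_gt (by omega), sg_of_lt (by omega)]; ring)
    rw [p1, p2, p3, p4, p5, Ef_even ho, Ef_even (ho.add ha)]
    have h1 := Ef_add_one r
    have h2 := Ef_add_one c
    linarith
  · subst h
    rw [if_pos rfl]
    rw [← Finset.sum_Ico_consecutive g (by omega : o ≤ r + 1) (by omega : r + 1 ≤ o + a),
        ← Finset.sum_Ico_consecutive g (by omega : o ≤ r) (by omega : r ≤ r + 1)]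
    have p1 : ∑ n ∈ Ico o r, g n = (-1) * (Ef r - Ef o) :=
      sum_sg_piece (by omega) _ _ (fun n h1 h2 => by
        rw [hg]; simp only []; rw [sg_of_lt h2, sg_of_gt h2]; ring)
    have p2 : ∑ n ∈ Ico r (r + 1), g n = 0 :=
      sum_singleton_pt _ _ (by rw [hg]; simp only []; rw [sg_self]; ring)
    have p3 : ∑ n ∈ Ico (r + 1) (o + a), g n = (-1) * (Ef (o + a) - Ef (r + 1)) :=
      sum_sg_piece (by omega) _ _ (fun n h1 h2 => by
        rw [hg]; simp only []; rw [sg_of_gt (by omega), sg_of_lt (by omega)]; ring)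
    rw [p1, p2, p3, Ef_even ho, Ef_even (ho.add ha)]
    have := Ef_succ_sub r
    linarith
  · rw [if_neg (by omega)]
    rw [← Finset.sum_Ico_consecutive g (by omega : o ≤ r + 1) (by omega : r + 1 ≤ o + a),
        ← Finset.sum_Ico_consecutive g (by omega : o ≤ r) (by omega : r ≤ r + 1),
        ← Finset.sum_Ico_consecutive g (by omega : o ≤ c + 1) (by omega : c + 1 ≤ r),
        ← Finset.sum_Ico_consecutive g (by omega : o ≤ c) (by omega : c ≤ c + 1)]
    have p1 : ∑ n ∈ Ico o c, g n = (-1) * (Ef c - Ef o) :=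
      sum_sg_piece (by omega) _ _ (fun n h1 h2 => by
        rw [hg]; simp only []; rw [sg_of_lt (by omega), sg_of_gt h2]; ring)
    have p2 : ∑ n ∈ Ico c (c + 1), g n = 0 :=
      sum_singleton_pt _ _ (by rw [hg]; simp only []; rw [sg_self c]; ring)
    have p3 : ∑ n ∈ Ico (c + 1) r, g n = 1 * (Ef r - Ef (c + 1)) :=
      sum_sg_piece (by omega) _ _ (fun n h1 h2 => by
        rw [hg]; simp only []; rw [sg_of_lt h2, sg_of_lt (by omega)]; ring)
    have p4 : ∑ n ∈ Ico r (r + 1), g n = 0 :=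
      sum_singleton_pt _ _ (by rw [hg]; simp only []; rw [sg_self]; ring)
    have p5 : ∑ n ∈ Ico (r + 1) (o + a), g n = (-1) * (Ef (o + a) - Ef (r + 1)) :=
      sum_sg_piece (by omega) _ _ (fun n h1 h2 => by
        rw [hg]; simp only []; rw [sg_of_gt (by omega), sg_of_lt (by omega)]; ring)
    rw [p1, p2, p3, p4, p5, Ef_even ho, Ef_even (ho.add ha)]
    have h1 := Ef_add_one r
    have h2 := Ef_add_one c
    linarith

section Blocks

variable {N : ℕ} {α : Fin N → ℕ}

lemma blockOff_even (heven : ∀ i, Even (α i)) (i : Fin N) : Even (blockOff α i) :=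
  Finset.even_sum _ (fun j _ => heven j)

lemma blockOff_add_le {i j : Fin N} (hij : i < j) :
    blockOff α i + α i ≤ blockOff α j := by
  have h1 : α i + blockOff α i ≤ blockOff α j := by
    unfold blockOff
    rw [← Finset.sum_insert (show i ∉ Finset.univ.filter (fun k => k < i) by simp)]
    apply Finset.sum_le_sum_of_subset
    intro k hk
    simp only [Finset.mem_insert, Finset.mem_filter, Finset.mem_univ, true_and] at hk ⊢
    rcases hk with rfl | hk
    · exact hij
    · exact hk.trans hij
  omega

lemma blockOff_add_le_sum (i : Fin N) : blockOff α i + α i ≤ ∑ k, α k := by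
  have h1 : α i + blockOff α i ≤ ∑ k, α k := by
    unfold blockOff
    rw [← Finset.sum_insert (show i ∉ Finset.univ.filter (fun k => k < i) by simp)]
    exact Finset.sum_le_sum_of_subset (Finset.subset_univ _)
  omega

lemma block_unique {i j : Fin N} {r : ℕ} (hi : inB α i r) (hj : inB α j r) : i = j := by
  rcases lt_trichotomy i j with h | h | h
  · exfalso; have := blockOff_add_le (α := α) h
    exact absurd hj.1 (by omega)
  · exact h
  · exfalso; have := blockOff_add_le (α := α) h
    exact absurd hi.1 (by omega)

lemma blockOff_succ {i j : Fin N} (h : (j : ℕ) = (i : ℕ) + 1) :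
    blockOff α j = blockOff α i + α i := by
  have hset : Finset.univ.filter (fun k => k < j)
      = insert i (Finset.univ.filter fun k => k < i) := by
    ext k
    simp only [Finset.mem_filter, Finset.mem_univ, true_and, Finset.mem_insert,
      Fin.lt_def, Fin.ext_iff, h]
    omega
  unfold blockOff
  rw [hset, Finset.sum_insert (by simp), add_comm]

lemma blockOff_last {i : Fin N} (h : (i : ℕ) + 1 = N) :
    blockOff α i + α i = ∑ k, α k := by
  have hset : (Finset.univ : Finset (Fin N))
      = insert i (Finset.univ.filter fun k => k < i) := by
    ext k
    have hk := k.isLt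
    simp only [Finset.mem_univ, Finset.mem_insert, Finset.mem_filter, true_and, true_iff,
      Fin.lt_def, Fin.ext_iff]
    omega
  rw [hset, Finset.sum_insert (by simp), add_comm]
  rfl

lemma block_exists (hN : 0 < N) {r : ℕ} (hr : r < ∑ i, α i) :
    ∃ i : Fin N, inB α i r := by
  classical
  have hzero : blockOff α (⟨0, hN⟩ : Fin N) = 0 := by
    unfold blockOff
    apply Finset.sum_eq_zero
    intro k hk
    simp only [Finset.mem_filter, Finset.mem_univ, true_and, Fin.lt_def] at hk
    omega
  set T : Finset (Fin N) := Finset.univ.filter (fun i => blockOff α i ≤ r) with hT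
  have h0 : (⟨0, hN⟩ : Fin N) ∈ T := by
    simp only [hT, Finset.mem_filter, Finset.mem_univ, true_and, hzero]
    exact Nat.zero_le r
  have hTne : T.Nonempty := ⟨_, h0⟩
  set i := T.max' hTne with hi
  have hile : blockOff α i ≤ r := by
    have := T.max'_mem hTne
    simp only [hT, Finset.mem_filter, Finset.mem_univ, true_and] at this
    exact this
  refine ⟨i, hile, ?_⟩
  by_contra hcon
  push_neg at hcon
  by_cases hlast : (i : ℕ) + 1 < N
  · set j : Fin N := ⟨(i : ℕ) + 1, hlast⟩ with hj
    have hoff : blockOff α j = blockOff α i + α i := blockOff_succ rfl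
    have hjT : j ∈ T := by
      simp only [hT, Finset.mem_filter, Finset.mem_univ, true_and, hoff]
      exact hcon
    have := Finset.le_max' T j hjT
    rw [← hi] at this
    have hij : i < j := by rw [Fin.lt_def]; simp [hj]
    exact absurd (lt_of_lt_of_le hij this) (lt_irrefl _)
  · have hlast' : (i : ℕ) + 1 = N := by have := i.isLt; omega
    have := blockOff_last (α := α) hlast'
    omega

end Blocks

section Entries

variable {N m : ℕ} {α : Fin N → ℕ}

lemma skew_apply (r c : Fin m) :
    blockSkew α m r c = if (∃ i, inB α i (r : ℕ) ∧ inB α i (c : ℕ)) then sg r c else 0 := by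
  unfold blockSkew sg
  rw [Matrix.of_apply]
  exact if_congr (exists_congr fun i => by unfold inB; tauto) rfl rfl

lemma skew_antisymm (r c : Fin m) : blockSkew α m c r = - blockSkew α m r c := by
  rw [skew_apply, skew_apply]
  by_cases h : ∃ i, inB α i (r : ℕ) ∧ inB α i (c : ℕ)
  · rw [if_pos (h.imp fun i hi => ⟨hi.2, hi.1⟩), if_pos h, sg_antisymm]
  · rw [if_neg (fun ⟨i, hi⟩ => h ⟨i, hi.2, hi.1⟩), if_neg h, neg_zero]

lemma skew_apply_block {r : Fin m} {i : Fin N} (hi : inB α i (r : ℕ)) (c : Fin m) :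
    blockSkew α m r c = if inB α i (c : ℕ) then sg r c else 0 := by
  rw [skew_apply]
  refine if_congr ⟨fun ⟨j, hj⟩ => ?_, fun h => ⟨i, hi, h⟩⟩ rfl rfl
  exact (block_unique hj.1 hi) ▸ hj.2

lemma skew_apply_block_col {c : Fin m} {i : Fin N} (hi : inB α i (c : ℕ)) (k : Fin m) :
    blockSkew α m k c = if inB α i (k : ℕ) then sg k c else 0 := by
  rw [skew_apply]
  refine if_congr ⟨fun ⟨j, hj⟩ => ?_, fun h => ⟨i, h, hi⟩⟩ rfl rfl
  exact (block_unique hj.2 hi) ▸ hj.1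

/-- restrict a `Fin m`-sum supported in a block to the block's `Ico` -/
lemma fin_sum_block (hoa : ∀ i : Fin N, blockOff α i + α i ≤ m) (i : Fin N) (g : ℕ → ℝ) :
    ∑ k : Fin m, (if inB α i (k : ℕ) then g (k : ℕ) else 0)
      = ∑ n ∈ Ico (blockOff α i) (blockOff α i + α i), g n := by
  rw [Fin.sum_univ_eq_sum_range (fun n => if inB α i n then g n else 0) m]
  have h1 : ∀ n, (if inB α i n then g n else 0)
      = if n ∈ Ico (blockOff α i) (blockOff α i + α i) then g n else 0 := fun n =>
    if_congr (by rw [Finset.mem_Ico]) rfl rfl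
  rw [Finset.sum_congr rfl (fun n _ => h1 n), Finset.sum_ite_mem,
    Finset.inter_eq_right.mpr]
  intro x hx
  rw [Finset.mem_Ico] at hx
  rw [Finset.mem_range]
  exact lt_of_lt_of_le hx.2 (hoa i)

end Entries

end WmatAux

set_option maxHeartbeats 1000000 in
open WmatAux in
/-- For a composition `α` of `m` with all entries even, `W_α` is invertible with
`W_α⁻¹ = 4N² Q_m W_α Q_m`. -/
theorem Wmat_inv_of_even (N m : ℕ) (hN : 0 < N) (α : Fin N → ℕ)
    (hpos : ∀ i, 0 < α i) (heven : ∀ i, Even (α i)) (hm : ∑ i, α i = m) :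
    IsUnit (Wmat α m) ∧
      (Wmat α m)⁻¹ = (4 * (N : ℝ) ^ 2) • (Qmat m * Wmat α m * Qmat m) := by
  have hNR : (N : ℝ) ≠ 0 := Nat.cast_ne_zero.mpr hN.ne'
  have hoa : ∀ i : Fin N, blockOff α i + α i ≤ m := fun i => (blockOff_add_le_sum i).trans hm.le
  have hmeven : Even m := by rw [← hm]; exact Finset.even_sum _ (fun i _ => heven i)
  -- the four sum computations
  have sumA : ∑ k : Fin m, (-1 : ℝ) ^ (k : ℕ) = 0 := by
    rw [Fin.sum_univ_eq_sum_range (fun n => (-1 : ℝ) ^ n) m, neg_one_geom_sum, if_pos hmeven]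
  have sumB : ∀ r : Fin m, ∑ k : Fin m, blockSkew α m r k * (-1 : ℝ) ^ (k : ℕ) = -1 := by
    intro r
    obtain ⟨i, hi⟩ := block_exists hN (show (r : ℕ) < ∑ i, α i by rw [hm]; exact r.isLt)
    calc ∑ k : Fin m, blockSkew α m r k * (-1 : ℝ) ^ (k : ℕ)
        = ∑ k : Fin m, (if inB α i (k : ℕ) then sg (r : ℕ) (k : ℕ) * (-1 : ℝ) ^ (k : ℕ) else 0) := by
          refine Finset.sum_congr rfl fun k _ => ?_
          rw [skew_apply_block hi k, ite_mul, zero_mul]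
      _ = ∑ n ∈ Ico (blockOff α i) (blockOff α i + α i), sg (r : ℕ) n * (-1 : ℝ) ^ n :=
          fin_sum_block hoa i (fun n => sg (r : ℕ) n * (-1 : ℝ) ^ n)
      _ = -1 := sumB_Ico (blockOff_even heven i) (heven i) hi.1 hi.2
  have sumC : ∀ c : Fin m, ∑ k : Fin m, (-1 : ℝ) ^ (k : ℕ) * blockSkew α m k c = 1 := by
    intro c
    have : ∀ k : Fin m, (-1 : ℝ) ^ (k : ℕ) * blockSkew α m k c
        = -(blockSkew α m c k * (-1 : ℝ) ^ (k : ℕ)) := fun k => by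
      rw [skew_antisymm c k]; ring
    rw [Finset.sum_congr rfl fun k _ => this k, Finset.sum_neg_distrib, sumB c]
    norm_num
  have sumD : ∀ r c : Fin m,
      ∑ k : Fin m, blockSkew α m r k * (-1 : ℝ) ^ (k : ℕ) * blockSkew α m k c
        = if r = c then (-1 : ℝ) ^ (r : ℕ) else 0 := by
    intro r c
    obtain ⟨i, hi⟩ := block_exists hN (show (r : ℕ) < ∑ i, α i by rw [hm]; exact r.isLt)
    by_cases hc : inB α i (c : ℕ)
    · calc ∑ k : Fin m, blockSkew α m r k * (-1 : ℝ) ^ (k : ℕ) * blockSkew α m k c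
          = ∑ k : Fin m, (if inB α i (k : ℕ) then
              sg (r : ℕ) (k : ℕ) * (-1 : ℝ) ^ (k : ℕ) * sg (k : ℕ) (c : ℕ) else 0) := by
            refine Finset.sum_congr rfl fun k _ => ?_
            rw [skew_apply_block hi k, skew_apply_block_col hc k]
            by_cases hk : inB α i (k : ℕ) <;> simp [hk]
        _ = ∑ n ∈ Ico (blockOff α i) (blockOff α i + α i),
              sg (r : ℕ) n * (-1 : ℝ) ^ n * sg n (c : ℕ) :=
            fin_sum_block hoa i (fun n => sg (r : ℕ) n * (-1 : ℝ) ^ n * sg n (c : ℕ))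
        _ = if (r : ℕ) = (c : ℕ) then (-1 : ℝ) ^ (r : ℕ) else 0 :=
            sumD_Ico (blockOff_even heven i) (heven i) hi.1 hi.2 hc.1 hc.2
        _ = if r = c then (-1 : ℝ) ^ (r : ℕ) else 0 := by
            refine if_congr ?_ rfl rfl; exact ⟨Fin.ext, fun h => by rw [h]⟩
    · have hrc : r ≠ c := fun h => hc (h ▸ hi)
      rw [if_neg hrc]
      refine Finset.sum_eq_zero fun k _ => ?_
      rw [skew_apply_block hi k]
      by_cases hk : inB α i (k : ℕ)
      · rw [if_pos hk, skew_apply, if_neg, mul_zero]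
        rintro ⟨j, hj1, hj2⟩
        exact hc (block_unique hj1 hk ▸ hj2)
      · rw [if_neg hk, zero_mul, zero_mul]
  -- entrywise value of W
  have Wapp : ∀ r c : Fin m, Wmat α m r c
      = (1 / (2 * (N : ℝ))) * blockSkew α m r c + 1 / (2 * (N : ℝ) ^ 2) := by
    intro r c
    simp [Wmat, Jmat, Matrix.add_apply, Matrix.smul_apply, smul_eq_mul]
  -- the key identity
  have key : Wmat α m * ((4 * (N : ℝ) ^ 2) • (Qmat m * Wmat α m * Qmat m)) = 1 := by
    ext r c
    rw [Matrix.mul_apply, Matrix.one_apply]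
    have hentry : ∀ k : Fin m,
        Wmat α m r k * ((4 * (N : ℝ) ^ 2) • (Qmat m * Wmat α m * Qmat m)) k c
        = (4 * (N : ℝ) ^ 2) * ((-1 : ℝ) ^ (c : ℕ)) *
            (Wmat α m r k * ((-1 : ℝ) ^ (k : ℕ)) * Wmat α m k c) := by
      intro k
      rw [Matrix.smul_apply, smul_eq_mul, Qmat, Matrix.mul_diagonal, Matrix.diagonal_mul]
      ring
    rw [Finset.sum_congr rfl fun k _ => hentry k, ← Finset.mul_sum]
    have expand : ∀ k : Fin m, Wmat α m r k * ((-1 : ℝ) ^ (k : ℕ)) * Wmat α m k c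
        = (1 / (2 * (N : ℝ)))^2 * (blockSkew α m r k * (-1 : ℝ) ^ (k : ℕ) * blockSkew α m k c)
          + (1 / (2 * (N : ℝ)) * (1 / (2 * (N : ℝ) ^ 2))) * (blockSkew α m r k * (-1 : ℝ) ^ (k : ℕ))
          + (1 / (2 * (N : ℝ)) * (1 / (2 * (N : ℝ) ^ 2))) * ((-1 : ℝ) ^ (k : ℕ) * blockSkew α m k c)
          + (1 / (2 * (N : ℝ) ^ 2))^2 * ((-1 : ℝ) ^ (k : ℕ)) := by
      intro k
      rw [Wapp r k, Wapp k c]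
      ring
    rw [Finset.sum_congr rfl fun k _ => expand k]
    rw [Finset.sum_add_distrib, Finset.sum_add_distrib, Finset.sum_add_distrib,
      ← Finset.mul_sum, ← Finset.mul_sum, ← Finset.mul_sum, ← Finset.mul_sum,
      sumA, sumB r, sumC c, sumD r c]
    by_cases h : r = c
    · subst h
      rw [if_pos rfl, if_pos rfl]
      have hpow : ((-1 : ℝ) ^ (r : ℕ)) * ((-1 : ℝ) ^ (r : ℕ)) = 1 := by
        rw [← pow_add]
        exact Even.neg_one_pow ⟨(r : ℕ), rfl⟩
      have key2 : (4 * (N : ℝ) ^ 2) * (1 / (2 * (N : ℝ))) ^ 2 = 1 := by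
        field_simp
        ring
      linear_combination ((-1 : ℝ) ^ (r : ℕ) * (-1 : ℝ) ^ (r : ℕ)) * key2 + hpow
    · rw [if_neg h, if_neg h]
      ring
  have key' : ((4 * (N : ℝ) ^ 2) • (Qmat m * Wmat α m * Qmat m)) * Wmat α m = 1 :=
    mul_eq_one_comm.mp key
  exact ⟨⟨⟨Wmat α m, _, key, key'⟩, rfl⟩, Matrix.inv_eq_right_inv key⟩
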